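/- arXiv:1109.0203 — 6 statements merged into one kernel-verified Lean document; each statement's English description precedes it below -/
import Mathlib

section
/- If E is a finitely generated module over a Noetherian local ring (R, m) such that E has no free direct summand, then every endomorphism of E of the form I + Σ fᵢ(−)·eᵢ (with fᵢ ∈ Hom_R(E,R), eᵢ ∈ E) is an automorphism of E; in particular the image of the natural map E* ⊗_R E → End_R(E) is contained in the Jacobson radical of End_R(E). -/
/-- `E` has a free direct summand, i.e. a direct summand isomorphic to `R`,
equivalently there is a split surjection `E → R`. -/
def HasFreeSummand (R E : Type*) [CommRing R] [AddCommGroup E] [Module R E] : Prop :=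
  ∃ (g : E →ₗ[R] R) (s : R →ₗ[R] E), g.comp s = LinearMap.id

/-!
If some `f : E →ₗ R` took a unit value `f x = u`, then `r ↦ r • u⁻¹ • x` would split `f`.
So without free summands every functional lands in `𝔪`, and every endomorphism in the image
of `E* ⊗ E` maps `E` into `𝔪 E`. Adding the identity to such an endomorphism gives a
surjection by Nakayama's lemma, hence an automorphism (a surjective endomorphism of a finite
module is injective). Since `𝔪 E` is stable under all endomorphisms, this applies to
`y φ + 1` for every `y`, which places `φ` in the Jacobson radical.
-/

open IsLocalRing

theorem Module.Dual.apply_mem_maximalIdeal {R E : Type*} [CommRing R] [IsLocalRing R]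
    [AddCommGroup E] [Module R E] (hfree : ¬ HasFreeSummand R E) (f : Module.Dual R E)
    (x : E) : f x ∈ maximalIdeal R := by
  by_contra hx
  have hu : IsUnit (f x) := by simpa [mem_maximalIdeal, mem_nonunits_iff] using hx
  refine hfree ⟨f, LinearMap.toSpanSingleton R E ((hu.unit⁻¹ : Rˣ) • x), ?_⟩
  ext
  simp [Units.smul_def]

theorem dualTensorHom_apply_mem_maximalIdeal_smul_top {R E : Type*} [CommRing R]
    [IsLocalRing R] [AddCommGroup E] [Module R E] (hfree : ¬ HasFreeSummand R E)
    {φ : Module.End R E} (hφ : φ ∈ LinearMap.range (dualTensorHom R E E)) (x : E) :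
    φ x ∈ maximalIdeal R • (⊤ : Submodule R E) := by
  obtain ⟨t, rfl⟩ := hφ
  induction t using TensorProduct.induction_on with
  | zero => simp
  | tmul f e =>
    rw [dualTensorHom_apply]
    exact Submodule.smul_mem_smul (f.apply_mem_maximalIdeal hfree x) trivial
  | add a b ha hb =>
    rw [map_add, LinearMap.add_apply]
    exact add_mem ha hb

theorem bijective_id_add_of_apply_mem_smul_top {R E : Type*} [CommRing R] [AddCommGroup E]
    [Module R E] [Module.Finite R E] {I : Ideal R} (hI : I ≤ Ideal.jacobson ⊥)
    {φ : Module.End R E} (hφ : ∀ x, φ x ∈ I • (⊤ : Submodule R E)) :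
    Function.Bijective ((LinearMap.id : E →ₗ[R] E) + φ) := by
  have hsurj : Function.Surjective ((LinearMap.id : E →ₗ[R] E) + φ) := by
    rw [← LinearMap.range_eq_top, ← top_le_iff]
    refine Submodule.le_of_le_smul_of_le_jacobson_bot (Module.Finite.fg_top (R := R)) hI
      fun x _ => ?_
    have hx : x = ((LinearMap.id : E →ₗ[R] E) + φ) x - φ x := by simp
    rw [hx]
    exact sub_mem (Submodule.mem_sup_left ⟨x, rfl⟩) (Submodule.mem_sup_right (hφ x))
  exact ⟨OrzechProperty.injective_of_surjective_endomorphism _ hsurj, hsurj⟩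

theorem stmt0_general (R E : Type) [CommRing R] [IsLocalRing R]
    [AddCommGroup E] [Module R E] [Module.Finite R E]
    (hfree : ¬ HasFreeSummand R E) :
    (∀ (n : ℕ) (f : Fin n → Module.Dual R E) (e : Fin n → E),
      Function.Bijective
        (((LinearMap.id : E →ₗ[R] E) + ∑ i, (f i).smulRight (e i)))) ∧
    (∀ φ : Module.End R E, φ ∈ LinearMap.range (dualTensorHom R E E) →
      φ ∈ Ideal.jacobson (⊥ : Ideal (Module.End R E))) := by
  have hjac := maximalIdeal_le_jacobson (R := R) ⊥
  refine ⟨fun n f e => ?_, fun φ hφ => ?_⟩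
  · have hmem : ∑ i, (f i).smulRight (e i) ∈ LinearMap.range (dualTensorHom R E E) :=
      ⟨∑ i, f i ⊗ₜ e i, by ext; simp [dualTensorHom_apply]⟩
    exact bijective_id_add_of_apply_mem_smul_top hjac
      (dualTensorHom_apply_mem_maximalIdeal_smul_top hfree hmem)
  · rw [Ideal.mem_jacobson_iff]
    intro y
    have hyφ (x : E) : (y * φ) x ∈ maximalIdeal R • (⊤ : Submodule R E) :=
      Submodule.smul_top_le_comap_smul_top _ y
        (dualTensorHom_apply_mem_maximalIdeal_smul_top hfree hφ x)
    have hunit : IsUnit (y * φ + 1) := by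
      rw [Module.End.isUnit_iff, add_comm]
      exact bijective_id_add_of_apply_mem_smul_top hjac hyφ
    refine ⟨↑hunit.unit⁻¹, ?_⟩
    rw [Ideal.mem_bot, mul_assoc, ← mul_add_one, IsUnit.val_inv_mul, sub_self]

/-- If `E` is a finitely generated module over a Noetherian local ring with no free direct
summand, then every endomorphism `I + Σ fᵢ(−)·eᵢ` is an automorphism; in particular every
element of the image of the natural map `E* ⊗ E → End_R(E)` lies in the Jacobson radical
of `End_R(E)`. -/
theorem stmt0 (R E : Type) [CommRing R] [IsLocalRing R] [IsNoetherianRing R]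
    [AddCommGroup E] [Module R E] [Module.Finite R E]
    (hfree : ¬ HasFreeSummand R E) :
    (∀ (n : ℕ) (f : Fin n → Module.Dual R E) (e : Fin n → E),
      Function.Bijective
        (((LinearMap.id : E →ₗ[R] E) + ∑ i, (f i).smulRight (e i)))) ∧
    (∀ φ : Module.End R E, φ ∈ LinearMap.range (dualTensorHom R E E) →
      φ ∈ Ideal.jacobson (⊥ : Ideal (Module.End R E))) :=
  stmt0_general R E hfree
end

section
/- For a finitely generated module E over a Noetherian local ring (R, m), the set Hom_R(E, mE) of endomorphisms of E whose image lies in mE is a two-sided ideal of End_R(E) contained in the Jacobson radical of End_R(E). -/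
/-!
Every endomorphism preserves `I • E`, so the maps with image in `I • E` form a two-sided ideal.
If `I` lies in the Jacobson radical and `φ` is such a map, then for every `ψ` the endomorphism
`f = ψ φ + 1` is the identity modulo `I • E`; by Nakayama it is surjective, and a surjective
endomorphism of a finitely generated module over a commutative ring is bijective, so `f` is a
unit. This is the criterion for `φ` to lie in the Jacobson radical of `End_R(E)`.
-/

open Submodule

theorem Ideal.mem_jacobson_bot_of_forall_isUnit_mul_add_one {A : Type*} [Ring A] {a : A}
    (h : ∀ b, IsUnit (b * a + 1)) : a ∈ Ideal.jacobson (⊥ : Ideal A) := by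
  refine Ideal.mem_jacobson_iff.mpr fun b => ?_
  obtain ⟨u, hu⟩ := h b
  refine ⟨↑u⁻¹, ?_⟩
  rw [Ideal.mem_bot, mul_assoc, ← mul_add_one, ← hu, Units.inv_mul, sub_self]

namespace Module.End

variable {R E : Type*} [CommRing R] [AddCommGroup E] [Module R E]

theorem apply_mem_smul_top (I : Ideal R) (f : Module.End R E) {x : E}
    (hx : x ∈ I • (⊤ : Submodule R E)) : f x ∈ I • (⊤ : Submodule R E) :=
  smul_top_le_comap_smul_top I f hx

def homToSmulTop (I : Ideal R) : TwoSidedIdeal (Module.End R E) :=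
  TwoSidedIdeal.mk' {φ | ∀ x, φ x ∈ I • (⊤ : Submodule R E)}
    (fun _ => zero_mem _)
    (fun hφ hψ x => add_mem (hφ x) (hψ x))
    (fun hφ x => neg_mem (hφ x))
    (fun {ψ _} hφ x => apply_mem_smul_top I ψ (hφ x))
    (fun {_ ψ} hφ x => hφ (ψ x))

theorem mem_homToSmulTop {I : Ideal R} {φ : Module.End R E} :
    φ ∈ homToSmulTop I ↔ ∀ x, φ x ∈ I • (⊤ : Submodule R E) :=
  TwoSidedIdeal.mem_mk' ..

theorem isUnit_of_sub_mem_smul_top [Module.Finite R E] {I : Ideal R}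
    (hI : I ≤ Ideal.jacobson ⊥) {f : Module.End R E}
    (hf : ∀ x, f x - x ∈ I • (⊤ : Submodule R E)) : IsUnit f := by
  have hsurj : Function.Surjective f := by
    refine LinearMap.surjective_of_surjective_comp_mkQ f I hI fun y => ?_
    obtain ⟨x, rfl⟩ := (I • (⊤ : Submodule R E)).mkQ_surjective y
    exact ⟨x, (Submodule.Quotient.eq _).mpr (hf x)⟩
  exact (Module.End.isUnit_iff f).mpr (OrzechProperty.bijective_of_surjective_endomorphism f hsurj)

theorem mem_jacobson_bot_of_mem_homToSmulTop [Module.Finite R E] {I : Ideal R}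
    (hI : I ≤ Ideal.jacobson ⊥) {φ : Module.End R E} (hφ : φ ∈ homToSmulTop I) :
    φ ∈ Ideal.jacobson (⊥ : Ideal (Module.End R E)) := by
  refine Ideal.mem_jacobson_bot_of_forall_isUnit_mul_add_one fun ψ =>
    isUnit_of_sub_mem_smul_top hI fun x => ?_
  simpa using apply_mem_smul_top I ψ (mem_homToSmulTop.mp hφ x)

end Module.End

theorem stmt1_general (R E : Type) [CommRing R] [IsLocalRing R]
    [AddCommGroup E] [Module R E] [Module.Finite R E] :
    ∃ I : TwoSidedIdeal (Module.End R E),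
      (∀ φ : Module.End R E,
        φ ∈ I ↔ ∀ x : E, φ x ∈ (IsLocalRing.maximalIdeal R) • (⊤ : Submodule R E)) ∧
      ∀ φ ∈ I, φ ∈ Ideal.jacobson (⊥ : Ideal (Module.End R E)) := by
  have hm : IsLocalRing.maximalIdeal R ≤ Ideal.jacobson ⊥ :=
    (IsLocalRing.jacobson_eq_maximalIdeal ⊥ bot_ne_top).ge
  exact ⟨Module.End.homToSmulTop _, fun _ => Module.End.mem_homToSmulTop,
    fun _ => Module.End.mem_jacobson_bot_of_mem_homToSmulTop hm⟩

/-- For a finitely generated module `E` over a Noetherian local ring `(R, m)`, the set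
`Hom_R(E, mE)` of endomorphisms with image inside `mE` is a two-sided ideal of
`End_R(E)` contained in its Jacobson radical. -/
theorem stmt1 (R E : Type) [CommRing R] [IsLocalRing R] [IsNoetherianRing R]
    [AddCommGroup E] [Module R E] [Module.Finite R E] :
    ∃ I : TwoSidedIdeal (Module.End R E),
      (∀ φ : Module.End R E,
        φ ∈ I ↔ ∀ x : E, φ x ∈ (IsLocalRing.maximalIdeal R) • (⊤ : Submodule R E)) ∧
      ∀ φ ∈ I, φ ∈ Ideal.jacobson (⊥ : Ideal (Module.End R E)) :=
  stmt1_general R E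
end

section
/- If the trace ideal E*(E) = R (i.e., E has a free direct summand R·ε with a splitting), then E is a projective left module over Λ = End_R(E): explicitly, if E = Rε ⊕ M then E ≅ Λε and the left annihilator of ε is a left ideal direct summand of Λ. -/
/-!
A trace ideal equal to `R` over a local ring means that some `g : E →ₗ[R] R` takes the value `1`
at some `e : E`, i.e. `E ≅ Re ⊕ ker g`. Then `x ↦ (y ↦ g y • x)` is a `Λ`-linear section of the
evaluation map `Λ → E`, `φ ↦ φ e`, so `E` is a direct summand of `Λ`, generated by `e`.
-/

theorem IsLocalRing.exists_eq_top_of_iSup_eq_top {R ι : Type*} [CommSemiring R] [IsLocalRing R]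
    {I : ι → Ideal R} (h : ⨆ i, I i = ⊤) : ∃ i, I i = ⊤ := by
  by_contra! hI
  have : ⨆ i, I i ≤ maximalIdeal R := iSup_le fun i ↦ le_maximalIdeal (hI i)
  exact (maximalIdeal.isMaximal R).ne_top (top_le_iff.mp (h ▸ this))

namespace Module.Dual

variable {R E : Type*} [CommSemiring R] [AddCommMonoid E] [Module R E]

def smulRightEnd (g : Module.Dual R E) : E →ₗ[Module.End R E] Module.End R E where
  toFun := g.smulRight
  map_add' x y := by ext; simp [smul_add]
  map_smul' φ x := by ext; simp [Module.End.mul_apply]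

theorem toSpanSingleton_comp_smulRightEnd {g : Module.Dual R E} {e : E} (h : g e = 1) :
    (LinearMap.toSpanSingleton (Module.End R E) E e) ∘ₗ g.smulRightEnd = LinearMap.id := by
  ext x
  simp [smulRightEnd, h]

theorem projective_end_of_apply_eq_one {g : Module.Dual R E} {e : E} (h : g e = 1) :
    Module.Projective (Module.End R E) E :=
  .of_split _ _ (toSpanSingleton_comp_smulRightEnd h)

theorem span_end_singleton_eq_top_of_apply_eq_one {g : Module.Dual R E} {e : E} (h : g e = 1) :
    Submodule.span (Module.End R E) {e} = ⊤ := by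
  rw [LinearMap.span_singleton_eq_range, LinearMap.range_eq_top]
  exact Function.LeftInverse.surjective (g := g.smulRightEnd)
    (LinearMap.congr_fun (toSpanSingleton_comp_smulRightEnd h))

end Module.Dual

theorem stmt3_general (R E : Type) [CommRing R] [IsLocalRing R]
    [AddCommGroup E] [Module R E]
    (htr : (⨆ f : Module.Dual R E, LinearMap.range f) = (⊤ : Submodule R R)) :
    Module.Projective (Module.End R E) E ∧
    ∃ ε : E, Submodule.span (Module.End R E) {ε} = (⊤ : Submodule (Module.End R E) E) := by
  obtain ⟨g, hg⟩ := IsLocalRing.exists_eq_top_of_iSup_eq_top htr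
  obtain ⟨e, he⟩ := LinearMap.range_eq_top.mp hg 1
  exact ⟨Module.Dual.projective_end_of_apply_eq_one he,
    e, Module.Dual.span_end_singleton_eq_top_of_apply_eq_one he⟩

/-- If the trace ideal of `E` is all of `R`, then `E` is a projective module over
`Λ = End_R(E)`; moreover `E` is generated over `Λ` by a single element `ε`
(so `E ≅ Λε`, the annihilator of `ε` splitting off `Λ`). -/
theorem stmt3 (R E : Type) [CommRing R] [IsLocalRing R] [IsNoetherianRing R]
    [AddCommGroup E] [Module R E] [Module.Finite R E]
    (htr : (⨆ f : Module.Dual R E, LinearMap.range f) = (⊤ : Submodule R R)) :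
    Module.Projective (Module.End R E) E ∧
    ∃ ε : E, Submodule.span (Module.End R E) {ε} = (⊤ : Submodule (Module.End R E) E) :=
  stmt3_general R E htr
end

section
/- Let R be a Gorenstein local ring and M a perfect R-module with minimal free resolution K of length n. For the module E of k-syzygies of M (1 ≤ k < n), there is an exact sequence 0 → E* ⊗_R E → End_R(E) → End_R(M) → 0. -/
/-!
Write `E j = range (d j)`, so that `0 → E (j+1) → K (j+1) → E j → 0` and
`0 → E 0 → K 0 → M → 0` are exact. The vanishing of `Ext^i(M, R)` for `i < n` says that every
functional on `E j` extends to `K j`, hence so does every map from `E j` to a finite free module.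

Call an endomorphism *stably zero* if it factors through a finite free module; these form
exactly the image of `E* ⊗ E` in `End E`. An endomorphism of `E (j+1)` extends to `K (j+1)` and
so descends to `E j`, and every endomorphism of `E j` lifts back; up to stably zero maps on both
sides this is a bijection. Composing down the resolution gives
`End (E k) / (E* ⊗ E) ≃ End M / (M* ⊗ M) = End M`, as `M* = 0`.

For injectivity, `E* ⊗ E` is a quotient of `K_k* ⊗ E = Hom(K_k, E)`, and a map `K_k → E` killing
`E` comes from `Hom(E (k-1), E)` (or from `Hom(M, E) = 0`). Every such map factors through
`K (k-1)`, because `Ext¹(E (k-2), E k) = 0` by dimension shifting down to the last, free,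
syzygy.
-/

/-- A Noetherian local ring is Gorenstein if it is Cohen–Macaulay (a maximal regular
sequence of length dim exists in the maximal ideal) and the Artinian quotient by such a
regular sequence has one-dimensional socle. -/
def IsGorensteinLocalRing (R : Type*) [CommRing R] [IsLocalRing R] : Prop :=
  IsNoetherianRing R ∧ ∃ rs : List R, (∀ r ∈ rs, r ∈ IsLocalRing.maximalIdeal R) ∧
    RingTheory.Sequence.IsRegular R rs ∧ (rs.length : WithBot ℕ∞) = ringKrullDim R ∧
    ∃ x : R ⧸ Ideal.ofList rs, x ≠ 0 ∧ (∀ a ∈ IsLocalRing.maximalIdeal R, a • x = 0) ∧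
      ∀ y : R ⧸ Ideal.ofList rs, (∀ a ∈ IsLocalRing.maximalIdeal R, a • y = 0) →
        ∃ c : R, y = c • x

open LinearMap Module TensorProduct Function

variable {R : Type*} [CommRing R]

section General

variable {A P B Y : Type*} [AddCommGroup A] [Module R A] [AddCommGroup P] [Module R P]
  [AddCommGroup B] [Module R B] [AddCommGroup Y] [Module R Y]

theorem Function.Exact.range_subtype {f : A →ₗ[R] P} {p : P →ₗ[R] B} (h : Exact f p) :
    Exact (range f).subtype p :=
  LinearMap.exact_iff.mpr (by rw [Submodule.range_subtype, h.linearMap_ker_eq])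

theorem Function.Exact.exists_comp_eq_of_comp_eq_zero {f : A →ₗ[R] P} {p : P →ₗ[R] B}
    (hfp : Exact f p) (hp : Surjective p) {Φ : P →ₗ[R] Y} (hΦ : Φ ∘ₗ f = 0) :
    ∃ Θ : B →ₗ[R] Y, Θ ∘ₗ p = Φ :=
  ⟨(range f).liftQ Φ (range_le_ker_iff.mpr hΦ) ∘ₗ
    (hfp.linearEquivOfSurjective hp).symm.toLinearMap, by ext x; simp⟩

theorem comp_mem_range_dualTensorHom [Free R P] [Module.Finite R P]
    (α : A →ₗ[R] P) (β : P →ₗ[R] Y) : β ∘ₗ α ∈ range (dualTensorHom R A Y) := by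
  obtain ⟨t, rfl⟩ := (dualTensorHom_bijective (R := R) (M := P) (N := Y)).2 β
  exact ⟨α.dualMap.rTensor Y t, by
    rw [← LinearMap.comp_apply, dualTensorHom_comp_rTensor_dualMap]; rfl⟩

theorem Module.Dual.eq_zero_of_injective_dualMap {f : A →ₗ[R] P} {p : P →ₗ[R] B}
    (hfp : Exact f p) (hp : Surjective p) (hf : Function.Injective f.dualMap)
    (g : Dual R B) : g = 0 := by
  rw [← LinearMap.cancel_right hp, zero_comp]
  apply hf
  ext x
  simp [hfp.apply_apply_eq_zero x]

theorem LinearMap.eq_zero_of_subsingleton_dual [Free R P] [Module.Finite R P]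
    [Subsingleton (Dual R B)] (Ψ : B →ₗ[R] P) : Ψ = 0 := by
  let b := Free.chooseBasis R P
  ext m
  apply b.equivFun.injective
  ext i
  simpa using LinearMap.congr_fun
    (Subsingleton.elim (LinearMap.proj i ∘ₗ b.equivFun.toLinearMap ∘ₗ Ψ : Dual R B) 0) m

theorem dualTensorHom_eq_zero_of_subsingleton_dual [Subsingleton (Dual R B)] :
    dualTensorHom R B Y = 0 :=
  TensorProduct.ext' fun f m => by rw [Subsingleton.elim f 0]; simp

theorem Submodule.nonempty_quotEquiv_of_prod {C : Submodule R (A × B)}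
    {I : Submodule R A} {J : Submodule R B} (hfst : ∀ x, ∃ y, (x, y) ∈ C)
    (hsnd : ∀ y, ∃ x, (x, y) ∈ C) (hIJ : ∀ z ∈ C, z.1 ∈ I ↔ z.2 ∈ J) :
    Nonempty ((A ⧸ I) ≃ₗ[R] (B ⧸ J)) := by
  let f := I.mkQ ∘ₗ LinearMap.fst R A B ∘ₗ C.subtype
  let g := J.mkQ ∘ₗ LinearMap.snd R A B ∘ₗ C.subtype
  have hf : Surjective f := by
    rintro ⟨x⟩
    obtain ⟨y, hy⟩ := hfst x
    exact ⟨⟨(x, y), hy⟩, rfl⟩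
  have hg : Surjective g := by
    rintro ⟨y⟩
    obtain ⟨x, hx⟩ := hsnd y
    exact ⟨⟨(x, y), hx⟩, rfl⟩
  have hker : ker f = ker g := by
    ext z
    simpa [f, g, Submodule.Quotient.mk_eq_zero] using hIJ z z.2
  exact ⟨(f.quotKerEquivOfSurjective hf).symm ≪≫ₗ Submodule.quotEquivOfEq _ _ hker ≪≫ₗ
    g.quotKerEquivOfSurjective hg⟩

end General

/-- For projective `P` this says `Ext¹(P ⧸ N, Y) = 0`. -/
def Submodule.HomExtends {P : Type*} [AddCommGroup P] [Module R P] (N : Submodule R P)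
    (Y : Type*) [AddCommGroup Y] [Module R Y] : Prop :=
  ∀ f : N →ₗ[R] Y, ∃ g : P →ₗ[R] Y, g ∘ₗ N.subtype = f

namespace Submodule.HomExtends

variable {P Y : Type*} [AddCommGroup P] [Module R P] [AddCommGroup Y] [Module R Y]
  {N : Submodule R P}

theorem of_free (hN : N.HomExtends R) [Free R Y] [Module.Finite R Y] : N.HomExtends Y := by
  intro f
  let b := Free.chooseBasis R Y
  choose g hg using fun i => hN (LinearMap.proj i ∘ₗ b.equivFun.toLinearMap ∘ₗ f)
  refine ⟨b.equivFun.symm.toLinearMap ∘ₗ LinearMap.pi g, ?_⟩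
  ext x
  apply b.equivFun.injective
  ext i
  simp only [LinearMap.comp_apply, LinearEquiv.coe_coe, LinearEquiv.apply_symm_apply]
  exact LinearMap.congr_fun (hg i) x

/- Dimension shifting along `0 → N' → P' → N → 0` and `0 → Y' → F → Y → 0`: lift `f ∘ q` to
`Φ : P' → F`, correct it on `N'` by an extension of `Φ|N' : N' → Y'`, descend to `N → F` and
extend that to `P`. -/
theorem of_exact {P' F : Type*} [AddCommGroup P'] [Module R P'] [Projective R P']
    [AddCommGroup F] [Module R F] {N' : Submodule R P'} {q : P' →ₗ[R] N}
    (hN'q : Exact N'.subtype q) (hq : Surjective q) {Y' : Submodule R F} {s : F →ₗ[R] Y}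
    (hY's : Exact Y'.subtype s) (hs : Surjective s) (hN' : N'.HomExtends Y')
    (hN : N.HomExtends F) : N.HomExtends Y := by
  intro f
  obtain ⟨Φ, hΦ⟩ := Module.projective_lifting_property s (f ∘ₗ q) hs
  have hmem : ∀ x : N', Φ x ∈ Y' := fun x => by
    have hqx : q x = 0 := hN'q.apply_apply_eq_zero x
    rw [← Submodule.range_subtype Y', ← hY's.linearMap_ker_eq, mem_ker, ← LinearMap.comp_apply,
      hΦ, LinearMap.comp_apply, hqx, map_zero]
  obtain ⟨v, hv⟩ := hN' ((Φ ∘ₗ N'.subtype).codRestrict Y' hmem)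
  obtain ⟨G, hG⟩ := hN'q.exists_comp_eq_of_comp_eq_zero hq (Φ := Φ - Y'.subtype ∘ₗ v) (by
    rw [sub_comp, LinearMap.comp_assoc, hv]
    ext
    exact sub_self _)
  obtain ⟨G', rfl⟩ := hN G
  refine ⟨s ∘ₗ G', ?_⟩
  rw [LinearMap.comp_assoc, ← LinearMap.cancel_right hq, LinearMap.comp_assoc, hG, comp_sub, hΦ,
    ← LinearMap.comp_assoc, hY's.linearMap_comp_eq_zero, zero_comp, sub_zero]

end Submodule.HomExtends

section StableEnd

variable {P B Y : Type*} [AddCommGroup P] [Module R P] [AddCommGroup B] [Module R B]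
  [AddCommGroup Y] [Module R Y] {N : Submodule R P} {p : P →ₗ[R] B}

/- Modulo endomorphisms factoring through finite free modules, this relation is the graph of an
isomorphism (`nonempty_quotEquiv_end`). -/
variable (N p) in
def compatibleEnds : Submodule R (Module.End R N × Module.End R B) where
  carrier := {z | ∃ Φ : Module.End R P, Φ ∘ₗ N.subtype = N.subtype ∘ₗ z.1 ∧ p ∘ₗ Φ = z.2 ∘ₗ p}
  add_mem' := by
    rintro ⟨φ, ψ⟩ ⟨φ', ψ'⟩ ⟨Φ, h₁, h₂⟩ ⟨Φ', h₁', h₂'⟩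
    exact ⟨Φ + Φ', by simp [add_comp, comp_add, h₁, h₁'], by simp [add_comp, comp_add, h₂, h₂']⟩
  zero_mem' := ⟨0, by simp, by simp⟩
  smul_mem' := by
    rintro c ⟨φ, ψ⟩ ⟨Φ, h₁, h₂⟩
    exact ⟨c • Φ, by rw [smul_comp, h₁]; ext; simp, by rw [comp_smul, h₂]; ext; simp⟩

theorem exists_mem_compatibleEnds_left [Free R P] [Module.Finite R P] (hNp : Exact N.subtype p)
    (hp : Surjective p) (hN : N.HomExtends R) (φ : Module.End R N) :
    ∃ ψ, (φ, ψ) ∈ compatibleEnds N p := by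
  obtain ⟨Φ, hΦ⟩ := hN.of_free (N.subtype ∘ₗ φ)
  obtain ⟨ψ, hψ⟩ := hNp.exists_comp_eq_of_comp_eq_zero hp (Φ := p ∘ₗ Φ) (by
    rw [LinearMap.comp_assoc, hΦ, ← LinearMap.comp_assoc, hNp.linearMap_comp_eq_zero, zero_comp])
  exact ⟨ψ, Φ, hΦ, hψ.symm⟩

theorem exists_mem_compatibleEnds_right [Projective R P] (hNp : Exact N.subtype p)
    (hp : Surjective p) (ψ : Module.End R B) : ∃ φ, (φ, ψ) ∈ compatibleEnds N p := by
  obtain ⟨Φ, hΦ⟩ := Module.projective_lifting_property p (ψ ∘ₗ p) hp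
  have hker : ker p = N := by rw [hNp.linearMap_ker_eq, Submodule.range_subtype]
  have hmaps : ∀ x ∈ N, Φ x ∈ N := by
    intro x hx
    rw [← hker, mem_ker] at hx ⊢
    rw [← LinearMap.comp_apply, hΦ, LinearMap.comp_apply, hx, map_zero]
  exact ⟨Φ.restrict hmaps, Φ, rfl, hΦ⟩

theorem mk_zero_mem_compatibleEnds (hNp : Exact N.subtype p) (hN : N.HomExtends R)
    {φ : Module.End R N} (hφ : φ ∈ range (dualTensorHom R N N)) :
    (φ, 0) ∈ compatibleEnds N p := by
  obtain ⟨t, rfl⟩ := hφ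
  induction t using TensorProduct.induction_on with
  | zero => rw [map_zero, Prod.mk_zero_zero]; exact zero_mem _
  | tmul f e =>
    obtain ⟨g, rfl⟩ := hN f
    exact ⟨g.smulRight (e : P), by ext; simp,
      by ext; simp [show p e = 0 from hNp.apply_apply_eq_zero e]⟩
  | add s t hs ht => simpa using add_mem hs ht

theorem zero_mk_mem_compatibleEnds (hNp : Exact N.subtype p) (hp : Surjective p)
    {ψ : Module.End R B} (hψ : ψ ∈ range (dualTensorHom R B B)) :
    (0, ψ) ∈ compatibleEnds N p := by
  obtain ⟨t, rfl⟩ := hψ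
  induction t using TensorProduct.induction_on with
  | zero => rw [map_zero, Prod.mk_zero_zero]; exact zero_mem _
  | tmul f b =>
    obtain ⟨y, rfl⟩ := hp b
    exact ⟨(f ∘ₗ p).smulRight y, by ext x; simp [show p x = 0 from hNp.apply_apply_eq_zero x],
      by ext; simp⟩
  | add s t hs ht => simpa using add_mem hs ht

theorem mem_range_of_mk_zero_mem_compatibleEnds [Free R P] [Module.Finite R P]
    (hNp : Exact N.subtype p) {φ : Module.End R N} (h : (φ, 0) ∈ compatibleEnds N p) :
    φ ∈ range (dualTensorHom R N N) := by
  obtain ⟨Φ, h₁, h₂⟩ := h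
  have hmem : ∀ x, Φ x ∈ N := fun x => by
    rw [← Submodule.range_subtype N, ← hNp.linearMap_ker_eq, mem_ker, ← LinearMap.comp_apply, h₂]
    rfl
  have hφ : φ = Φ.codRestrict N hmem ∘ₗ N.subtype := by
    ext x
    exact (LinearMap.congr_fun h₁ x).symm
  exact hφ ▸ comp_mem_range_dualTensorHom _ _

theorem mem_range_of_zero_mk_mem_compatibleEnds [Free R P] [Module.Finite R P]
    (hNp : Exact N.subtype p) (hp : Surjective p) {ψ : Module.End R B}
    (h : (0, ψ) ∈ compatibleEnds N p) : ψ ∈ range (dualTensorHom R B B) := by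
  obtain ⟨Φ, h₁, h₂⟩ := h
  obtain ⟨Θ, hΘ⟩ := hNp.exists_comp_eq_of_comp_eq_zero hp (Φ := Φ) (by simpa using h₁)
  have hψ : ψ = p ∘ₗ Θ := by
    rw [← LinearMap.cancel_right hp, LinearMap.comp_assoc, hΘ, h₂]
  exact hψ ▸ comp_mem_range_dualTensorHom Θ p

theorem fst_mem_range_iff_snd_mem_range [Free R P] [Module.Finite R P]
    (hNp : Exact N.subtype p) (hp : Surjective p) (hN : N.HomExtends R)
    {z : Module.End R N × Module.End R B} (hz : z ∈ compatibleEnds N p) :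
    z.1 ∈ range (dualTensorHom R N N) ↔ z.2 ∈ range (dualTensorHom R B B) := by
  obtain ⟨φ, ψ⟩ := z
  constructor
  · intro h
    refine mem_range_of_zero_mk_mem_compatibleEnds hNp hp ?_
    simpa using sub_mem hz (mk_zero_mem_compatibleEnds hNp hN h)
  · intro h
    refine mem_range_of_mk_zero_mem_compatibleEnds hNp ?_
    simpa using sub_mem hz (zero_mk_mem_compatibleEnds hNp hp h)

theorem nonempty_quotEquiv_end [Free R P] [Module.Finite R P] (hNp : Exact N.subtype p)
    (hp : Surjective p) (hN : N.HomExtends R) :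
    Nonempty ((Module.End R N ⧸ range (dualTensorHom R N N)) ≃ₗ[R]
      (Module.End R B ⧸ range (dualTensorHom R B B))) :=
  Submodule.nonempty_quotEquiv_of_prod (exists_mem_compatibleEnds_left hNp hp hN)
    (exists_mem_compatibleEnds_right hNp hp) fun _ hz =>
      fst_mem_range_iff_snd_mem_range hNp hp hN hz

theorem dualTensorHom_injective_of_exact [Free R P] [Module.Finite R P]
    (hNp : Exact N.subtype p) (hp : Surjective p) (hN : N.HomExtends R)
    (hBY : ∀ Ψ : B →ₗ[R] Y, Ψ ∈ range (dualTensorHom R B Y)) :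
    Function.Injective (dualTensorHom R N Y) := by
  rw [injective_iff_map_eq_zero]
  intro t ht
  obtain ⟨s, rfl⟩ := N.subtype.dualMap.rTensor_surjective Y hN t
  have hs : dualTensorHom R P Y s ∘ₗ N.subtype = 0 := by
    rw [← ht, ← LinearMap.comp_apply (dualTensorHom R N Y), dualTensorHom_comp_rTensor_dualMap]
    rfl
  obtain ⟨Θ, hΘ⟩ := hNp.exists_comp_eq_of_comp_eq_zero hp hs
  obtain ⟨u, hu⟩ := hBY Θ
  have hsu : s = p.dualMap.rTensor Y u := by
    apply (dualTensorHom_bijective (R := R) (M := P) (N := Y)).1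
    rw [← LinearMap.comp_apply (dualTensorHom R P Y), dualTensorHom_comp_rTensor_dualMap,
      LinearMap.comp_apply, hu, ← hΘ]
    rfl
  have hzero : (0 : N →ₗ[R] B).dualMap = 0 := by ext; simp
  rw [hsu, ← rTensor_comp_apply, dualMap_comp_dualMap, hNp.linearMap_comp_eq_zero, hzero,
    rTensor_zero, LinearMap.zero_apply]

end StableEnd

section Resolution

variable {M : Type*} [AddCommGroup M] [Module R M] {K : ℕ → Type*} [∀ i, AddCommGroup (K i)]
  [∀ i, Module R (K i)] {d : ∀ i, K (i + 1) →ₗ[R] K i} {π : K 0 →ₗ[R] M} {n' : ℕ}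

theorem homExtends_range_of_exact_dualMap {j : ℕ} (hex : Exact (d (j + 1)) (d j))
    (hperf : Exact (d j).dualMap (d (j + 1)).dualMap) : (range (d j)).HomExtends R := by
  intro f
  obtain ⟨g, hg⟩ := (hperf (f ∘ₗ (d j).rangeRestrict)).mp (by
    ext x
    simp [show (d j).rangeRestrict (d (j + 1) x) = 0 from Subtype.ext (hex.apply_apply_eq_zero x)])
  refine ⟨g, ?_⟩
  rw [← LinearMap.cancel_right (d j).surjective_rangeRestrict, ← hg]
  rfl

variable [∀ i, Free R (K i)] [∀ i, Module.Finite R (K i)]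

theorem homExtends_range_range (hex : ∀ i < n', Exact (d (i + 1)) (d i))
    (hinj : Function.Injective (d n'))
    (hperf : ∀ i < n', Exact (d i).dualMap (d (i + 1)).dualMap) :
    ∀ i < n', (range (d i)).HomExtends (range (d (i + 1))) := by
  suffices ∀ c i, i + 1 + c = n' → (range (d i)).HomExtends (range (d (i + 1))) from
    fun i hi => this (n' - (i + 1)) i (by omega)
  intro c
  induction c with
  | zero =>
    intro i hi
    obtain rfl : n' = i + 1 := by omega
    let e := LinearEquiv.ofInjective (d (i + 1)) hinj
    have : Free R (range (d (i + 1))) := Free.of_equiv e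
    have : Module.Finite R (range (d (i + 1))) := Module.Finite.equiv e
    exact (homExtends_range_of_exact_dualMap (hex i (by omega)) (hperf i (by omega))).of_free
  | succ c ih =>
    intro i hi
    exact Submodule.HomExtends.of_exact (hex i (by omega)).linearMap_rangeRestrict
      (d i).surjective_rangeRestrict (hex (i + 1) (by omega)).linearMap_rangeRestrict
      (d (i + 1)).surjective_rangeRestrict (ih (i + 1) (by omega))
      (homExtends_range_of_exact_dualMap (hex i (by omega)) (hperf i (by omega))).of_free

theorem nonempty_quotEquiv_end_range [Subsingleton (Dual R M)] (hπ : Surjective π)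
    (hex0 : Exact (d 0) π) (hex : ∀ i < n', Exact (d (i + 1)) (d i))
    (hperf : ∀ i < n', Exact (d i).dualMap (d (i + 1)).dualMap) :
    ∀ j < n', Nonempty ((Module.End R (range (d j)) ⧸
      range (dualTensorHom R (range (d j)) (range (d j)))) ≃ₗ[R] Module.End R M)
  | 0, hj => by
    obtain ⟨e⟩ := nonempty_quotEquiv_end hex0.range_subtype hπ
      (homExtends_range_of_exact_dualMap (hex 0 hj) (hperf 0 hj))
    exact ⟨e ≪≫ₗ Submodule.quotEquivOfEqBot _
      (by rw [dualTensorHom_eq_zero_of_subsingleton_dual, range_zero])⟩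
  | j + 1, hj => by
    obtain ⟨e⟩ := nonempty_quotEquiv_end (hex j (by omega)).linearMap_rangeRestrict
      (d j).surjective_rangeRestrict
      (homExtends_range_of_exact_dualMap (hex (j + 1) hj) (hperf (j + 1) hj))
    obtain ⟨e'⟩ := nonempty_quotEquiv_end_range hπ hex0 hex hperf j (by omega)
    exact ⟨e ≪≫ₗ e'⟩

theorem dualTensorHom_range_injective [Subsingleton (Dual R M)] (hπ : Surjective π)
    (hex0 : Exact (d 0) π) (hex : ∀ i < n', Exact (d (i + 1)) (d i))
    (hinj : Function.Injective (d n'))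
    (hperf : ∀ i < n', Exact (d i).dualMap (d (i + 1)).dualMap) (j : ℕ) (hj : j < n') :
    Function.Injective (dualTensorHom R (range (d j)) (range (d j))) := by
  have hN := homExtends_range_of_exact_dualMap (hex j hj) (hperf j hj)
  cases j with
  | zero =>
    refine dualTensorHom_injective_of_exact hex0.range_subtype hπ hN fun Ψ => ?_
    have hΨ : Ψ = 0 := by
      ext m
      simpa using LinearMap.congr_fun ((range (d 0)).subtype ∘ₗ Ψ).eq_zero_of_subsingleton_dual m
    exact hΨ ▸ zero_mem _
  | succ j =>
    refine dualTensorHom_injective_of_exact (hex j (by omega)).linearMap_rangeRestrict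
      (d j).surjective_rangeRestrict hN fun Ψ => ?_
    obtain ⟨g, rfl⟩ := homExtends_range_range hex hinj hperf j (by omega) Ψ
    exact comp_mem_range_dualTensorHom _ _

end Resolution

/- In the notation of the paper, `n = n' + 1`, `k = k' + 1` and `E = range (d k')`; `hperf0` and
`hperf` say `Ext^i(M, R) = 0` for `i < n`. -/
theorem stmt11_general (R : Type) [CommRing R]
    (M : Type) [AddCommGroup M] [Module R M]
    (n' : ℕ)
    (K : ℕ → Type) [∀ i, AddCommGroup (K i)] [∀ i, Module R (K i)]
    [∀ i, Module.Free R (K i)] [∀ i, Module.Finite R (K i)]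
    (d : ∀ i, K (i + 1) →ₗ[R] K i) (π : K 0 →ₗ[R] M)
    (hπ : Function.Surjective π) (hex0 : Function.Exact (d 0) π)
    (hex : ∀ i, i + 1 < n' + 1 → Function.Exact (d (i + 1)) (d i))
    (hinj : Function.Injective (d n'))
    (hperf0 : Function.Injective (d 0).dualMap)
    (hperf : ∀ i, i + 1 < n' + 1 →
      Function.Exact ((d i).dualMap) ((d (i + 1)).dualMap))
    (k' : ℕ) (hk : k' + 1 < n' + 1)
    :
    Function.Injective (dualTensorHom R (LinearMap.range (d k')) (LinearMap.range (d k'))) ∧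
    ∃ g : Module.End R (LinearMap.range (d k')) →ₗ[R] Module.End R M,
      Function.Surjective g ∧
      Function.Exact
        (dualTensorHom R (LinearMap.range (d k')) (LinearMap.range (d k'))) g := by
  have hex' : ∀ i < n', Exact (d (i + 1)) (d i) := fun i hi => hex i (by omega)
  have hperf' : ∀ i < n', Exact (d i).dualMap (d (i + 1)).dualMap :=
    fun i hi => hperf i (by omega)
  have : Subsingleton (Dual R M) := ⟨fun f g => by
    rw [Module.Dual.eq_zero_of_injective_dualMap hex0 hπ hperf0 f,
      Module.Dual.eq_zero_of_injective_dualMap hex0 hπ hperf0 g]⟩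
  obtain ⟨e⟩ := nonempty_quotEquiv_end_range hπ hex0 hex' hperf' k' (by omega)
  refine ⟨dualTensorHom_range_injective hπ hex0 hex' hinj hperf' k' (by omega),
    e.toLinearMap ∘ₗ (range _).mkQ, e.surjective.comp (Submodule.mkQ_surjective _), ?_⟩
  rw [LinearMap.exact_iff, LinearEquiv.ker_comp, Submodule.ker_mkQ]

/-- Let `R` be a Gorenstein local ring and `M` a perfect module with minimal free
resolution `0 → K_n → ⋯ → K_0 → M → 0` of length `n = n' + 1` (perfection: the dualized
complex is exact except at the right end, i.e. `Ext^i(M,R) = 0` for `i < n`).  For the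
module `E` of `k`-syzygies of `M` (`k = k' + 1`, `1 ≤ k < n`), namely the image of
`K_k → K_{k-1}`, there is an exact sequence `0 → E* ⊗ E → End_R(E) → End_R(M) → 0`,
the first map being the natural one. -/
theorem stmt11 (R : Type) [CommRing R] [IsLocalRing R] (hG : IsGorensteinLocalRing R)
    (M : Type) [AddCommGroup M] [Module R M] [Module.Finite R M]
    (n' : ℕ)
    (K : ℕ → Type) [∀ i, AddCommGroup (K i)] [∀ i, Module R (K i)]
    [∀ i, Module.Free R (K i)] [∀ i, Module.Finite R (K i)]
    (d : ∀ i, K (i + 1) →ₗ[R] K i) (π : K 0 →ₗ[R] M)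
    (hπ : Function.Surjective π) (hex0 : Function.Exact (d 0) π)
    (hex : ∀ i, i + 1 < n' + 1 → Function.Exact (d (i + 1)) (d i))
    (hinj : Function.Injective (d n'))
    (hmin : ∀ i, LinearMap.range (d i) ≤
      (IsLocalRing.maximalIdeal R) • (⊤ : Submodule R (K i)))
    (hperf0 : Function.Injective (d 0).dualMap)
    (hperf : ∀ i, i + 1 < n' + 1 →
      Function.Exact ((d i).dualMap) ((d (i + 1)).dualMap))
    (k' : ℕ) (hk : k' + 1 < n' + 1)
    :
    Function.Injective (dualTensorHom R (LinearMap.range (d k')) (LinearMap.range (d k'))) ∧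
    ∃ g : Module.End R (LinearMap.range (d k')) →ₗ[R] Module.End R M,
      Function.Surjective g ∧
      Function.Exact
        (dualTensorHom R (LinearMap.range (d k')) (LinearMap.range (d k'))) g :=
  stmt11_general R M n' K d π hπ hex0 hex hinj hperf0 hperf k' hk
end

section
/- Let R be a local ring and E = E_1 ⊕ E_2 a finitely generated module such that Hom(E_j, E_i)·Hom(E_i, E_j) ⊆ Hom(E_j, m E_j) for i ≠ j. Then the Jacobson radical of End_R(E) is the set of matrices [[a, c], [b, d]] with a ∈ J_1, d ∈ J_2, b ∈ Hom(E_1, E_2), c ∈ Hom(E_2, E_1), where J_i is the Jacobson radical of End_R(E_i). -/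
/-!
Quasi-regularity transfers between `1 + f ∘ g` and `1 + g ∘ f` even when `f` and `g` are maps
between different modules. Since the Jacobson radical is the largest left ideal of quasi-regular
elements, compressing by the structure maps of `E₁ × E₂` sends `J(End E)` into `J(End Eᵢ)`, and
conversely a block `ιᵢ ∘ t ∘ πⱼ` lies in `J(End E)` as soon as every `πⱼ ∘ ψ ∘ ιᵢ ∘ t` lies in
`J(End Eⱼ)`. For a diagonal block this follows from `t ∈ J(End Eᵢ)`; for an off-diagonal block it is
the transition condition, because by Nakayama's lemma an endomorphism of a finite module with image
in `m E` belongs to the Jacobson radical.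
-/

open Ideal LinearMap

theorem Ideal.mem_jacobson_bot_iff_isUnit_mul_add_one {A : Type*} [Ring A] {x : A} :
    x ∈ Ideal.jacobson (⊥ : Ideal A) ↔ ∀ y, IsUnit (y * x + 1) := by
  constructor
  · intro hx y
    obtain ⟨z, hz⟩ := mem_jacobson_iff.1 hx y
    -- `z = -(z * y) * x + 1` has a left inverse `w` as well, so `z` is a unit.
    obtain ⟨w, hw⟩ := mem_jacobson_iff.1 hx (-(z * y))
    rw [mem_bot] at hz hw
    have hzl : z * (y * x + 1) = 1 := by rw [← sub_eq_zero, ← hz]; noncomm_ring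
    have hwz : w * z = 1 := by
      rw [← sub_eq_zero, ← hw]
      calc w * z - 1 = w * (z * (y * x + 1)) - w * z * y * x - 1 := by noncomm_ring
        _ = _ := by rw [hzl]; noncomm_ring
    have hzr : (y * x + 1) * z = 1 := by
      calc (y * x + 1) * z = w * z * (y * x + 1) * z := by rw [hwz, one_mul]
        _ = w * z := by rw [mul_assoc w, hzl, mul_one]
        _ = 1 := hwz
    exact ⟨⟨_, z, hzr, hzl⟩, rfl⟩
  · intro h
    refine mem_jacobson_iff.2 fun y => ⟨↑(h y).unit⁻¹, ?_⟩
    rw [mem_bot, mul_assoc, ← mul_add_one, sub_eq_zero]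
    exact (h y).val_inv_mul

section

variable {R M N : Type*} [Semiring R] [AddCommGroup M] [Module R M] [AddCommGroup N] [Module R N]

/-- If `w` inverts `f ∘ g + 1`, then `1 - g ∘ w ∘ f` inverts `g ∘ f + 1`. -/
theorem LinearMap.isUnit_comp_add_one_swap {f : M →ₗ[R] N} {g : N →ₗ[R] M}
    (h : IsUnit (f ∘ₗ g + 1)) : IsUnit (g ∘ₗ f + 1) := by
  obtain ⟨w, hw₁, hw₂⟩ := isUnit_iff_exists.1 h
  have hr := LinearMap.congr_fun hw₁
  have hl := LinearMap.congr_fun hw₂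
  simp only [Module.End.mul_apply, add_apply, comp_apply, Module.End.one_apply, map_add] at hl hr
  refine isUnit_iff_exists.2 ⟨1 - g ∘ₗ w ∘ₗ f, ?_, ?_⟩ <;> ext x
  · simp only [Module.End.mul_apply, add_apply, sub_apply, comp_apply, Module.End.one_apply,
      map_sub]
    rw [← map_add, hr]
    abel
  · simp only [Module.End.mul_apply, add_apply, sub_apply, comp_apply, Module.End.one_apply,
      map_add]
    calc _ = g (f x) - (g (w (f (g (f x)))) + g (w (f x))) + x := by abel
      _ = x := by rw [← map_add, hl, sub_self, zero_add]

theorem LinearMap.comp_comp_mem_jacobson_bot {φ : Module.End R N}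
    (hφ : φ ∈ Ideal.jacobson (⊥ : Ideal (Module.End R N))) (f : M →ₗ[R] N) (g : N →ₗ[R] M) :
    g ∘ₗ φ ∘ₗ f ∈ Ideal.jacobson (⊥ : Ideal (Module.End R M)) := by
  rw [mem_jacobson_bot_iff_isUnit_mul_add_one] at hφ ⊢
  exact fun y => isUnit_comp_add_one_swap (f := f) (g := y ∘ₗ g ∘ₗ φ) (hφ (f ∘ₗ y ∘ₗ g))

theorem LinearMap.comp_mem_jacobson_bot_of_forall {f : M →ₗ[R] N} {g : N →ₗ[R] M}
    (h : ∀ ψ : Module.End R N, g ∘ₗ ψ ∘ₗ f ∈ Ideal.jacobson (⊥ : Ideal (Module.End R M))) :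
    f ∘ₗ g ∈ Ideal.jacobson (⊥ : Ideal (Module.End R N)) := by
  refine mem_jacobson_bot_iff_isUnit_mul_add_one.2 fun ψ => ?_
  have hunit := mem_jacobson_bot_iff_isUnit_mul_add_one.1 (h ψ) 1
  rw [one_mul] at hunit
  exact isUnit_comp_add_one_swap (f := g) (g := ψ ∘ₗ f) hunit

end

section

variable {R E₁ E₂ : Type*} [Semiring R] [AddCommGroup E₁] [Module R E₁]
  [AddCommGroup E₂] [Module R E₂]

theorem LinearMap.sum_blocks_eq (φ : Module.End R (E₁ × E₂)) :
    (inl R E₁ E₂ ∘ₗ fst R E₁ E₂ ∘ₗ φ ∘ₗ inl R E₁ E₂) ∘ₗ fst R E₁ E₂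
      + (inl R E₁ E₂ ∘ₗ fst R E₁ E₂ ∘ₗ φ ∘ₗ inr R E₁ E₂) ∘ₗ snd R E₁ E₂
      + (inr R E₁ E₂ ∘ₗ snd R E₁ E₂ ∘ₗ φ ∘ₗ inl R E₁ E₂) ∘ₗ fst R E₁ E₂
      + (inr R E₁ E₂ ∘ₗ snd R E₁ E₂ ∘ₗ φ ∘ₗ inr R E₁ E₂) ∘ₗ snd R E₁ E₂ = φ := by
  ext <;> simp [← Prod.zero_eq_mk]

theorem Module.End.mem_jacobson_bot_prod_iff
    (h₁ : ∀ (f : E₁ →ₗ[R] E₂) (g : E₂ →ₗ[R] E₁),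
      g ∘ₗ f ∈ Ideal.jacobson (⊥ : Ideal (Module.End R E₁)))
    (h₂ : ∀ (f : E₂ →ₗ[R] E₁) (g : E₁ →ₗ[R] E₂),
      g ∘ₗ f ∈ Ideal.jacobson (⊥ : Ideal (Module.End R E₂)))
    (φ : Module.End R (E₁ × E₂)) :
    φ ∈ Ideal.jacobson (⊥ : Ideal (Module.End R (E₁ × E₂))) ↔
      fst R E₁ E₂ ∘ₗ φ ∘ₗ inl R E₁ E₂ ∈ Ideal.jacobson (⊥ : Ideal (Module.End R E₁)) ∧
      snd R E₁ E₂ ∘ₗ φ ∘ₗ inr R E₁ E₂ ∈ Ideal.jacobson (⊥ : Ideal (Module.End R E₂)) := by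
  refine ⟨fun hφ => ⟨comp_comp_mem_jacobson_bot hφ _ _, comp_comp_mem_jacobson_bot hφ _ _⟩,
    fun ⟨ha, hd⟩ => ?_⟩
  rw [← φ.sum_blocks_eq]
  refine add_mem (add_mem (add_mem ?_ ?_) ?_) ?_ <;>
    refine comp_mem_jacobson_bot_of_forall fun ψ => ?_
  · exact mul_mem_left _ (fst R E₁ E₂ ∘ₗ ψ ∘ₗ inl R E₁ E₂) ha
  · exact h₂ _ (snd R E₁ E₂ ∘ₗ ψ ∘ₗ inl R E₁ E₂)
  · exact h₁ _ (fst R E₁ E₂ ∘ₗ ψ ∘ₗ inr R E₁ E₂)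
  · exact mul_mem_left _ (snd R E₁ E₂ ∘ₗ ψ ∘ₗ inr R E₁ E₂) hd

end

theorem Module.End.mem_jacobson_bot_of_forall_mem_smul_top {R M : Type*} [CommRing R]
    [AddCommGroup M] [Module R M] [Module.Finite R M] {I : Ideal R} (hI : I ≤ Ideal.jacobson ⊥)
    {f : Module.End R M} (hf : ∀ x, f x ∈ I • (⊤ : Submodule R M)) :
    f ∈ Ideal.jacobson (⊥ : Ideal (Module.End R M)) := by
  refine mem_jacobson_bot_iff_isUnit_mul_add_one.2 fun y => ?_
  have hsurj : Function.Surjective (y * f + 1 : Module.End R M) := by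
    rw [← range_eq_top, ← top_le_iff]
    refine Submodule.le_of_le_smul_of_le_jacobson_bot Module.Finite.fg_top hI fun x _ => ?_
    have hx : x = (y * f + 1 : Module.End R M) x - y (f x) := by simp
    rw [hx]
    exact Submodule.sub_mem _ (Submodule.mem_sup_left ⟨x, rfl⟩)
      (Submodule.mem_sup_right (Submodule.smul_top_le_comap_smul_top I y (hf x)))
  exact (isUnit_iff _).2 (OrzechProperty.bijective_of_surjective_endomorphism _ hsurj)

theorem stmt15_general (R E₁ E₂ : Type) [CommRing R] [IsLocalRing R]
    [AddCommGroup E₁] [Module R E₁] [Module.Finite R E₁]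
    [AddCommGroup E₂] [Module R E₂] [Module.Finite R E₂]
    (h12 : ∀ (f : E₁ →ₗ[R] E₂) (g : E₂ →ₗ[R] E₁) (x : E₁),
      g (f x) ∈ (IsLocalRing.maximalIdeal R) • (⊤ : Submodule R E₁))
    (h21 : ∀ (f : E₂ →ₗ[R] E₁) (g : E₁ →ₗ[R] E₂) (x : E₂),
      g (f x) ∈ (IsLocalRing.maximalIdeal R) • (⊤ : Submodule R E₂)) :
    ∀ φ : Module.End R (E₁ × E₂),
      φ ∈ Ideal.jacobson (⊥ : Ideal (Module.End R (E₁ × E₂))) ↔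
      ((LinearMap.fst R E₁ E₂ ∘ₗ φ ∘ₗ LinearMap.inl R E₁ E₂) ∈
          Ideal.jacobson (⊥ : Ideal (Module.End R E₁)) ∧
        (LinearMap.snd R E₁ E₂ ∘ₗ φ ∘ₗ LinearMap.inr R E₁ E₂) ∈
          Ideal.jacobson (⊥ : Ideal (Module.End R E₂))) :=
  Module.End.mem_jacobson_bot_prod_iff
    (fun f g => Module.End.mem_jacobson_bot_of_forall_mem_smul_top
      (IsLocalRing.maximalIdeal_le_jacobson ⊥) (h12 f g))
    (fun f g => Module.End.mem_jacobson_bot_of_forall_mem_smul_top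
      (IsLocalRing.maximalIdeal_le_jacobson ⊥) (h21 f g))

/-- Let `E = E₁ ⊕ E₂` over a Noetherian local ring `(R, m)` with the transition
conditions `Hom(E_j, E_i)·Hom(E_i, E_j) ⊆ Hom(E_j, m E_j)` for `i ≠ j`.  Then the
Jacobson radical of `End_R(E)`, in the matrix description, consists exactly of the
`φ` whose diagonal components lie in the Jacobson radicals of `End(E₁)` and `End(E₂)`
(the off-diagonal entries being arbitrary). -/
theorem stmt15 (R E₁ E₂ : Type) [CommRing R] [IsLocalRing R] [IsNoetherianRing R]
    [AddCommGroup E₁] [Module R E₁] [Module.Finite R E₁]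
    [AddCommGroup E₂] [Module R E₂] [Module.Finite R E₂]
    (h12 : ∀ (f : E₁ →ₗ[R] E₂) (g : E₂ →ₗ[R] E₁) (x : E₁),
      g (f x) ∈ (IsLocalRing.maximalIdeal R) • (⊤ : Submodule R E₁))
    (h21 : ∀ (f : E₂ →ₗ[R] E₁) (g : E₁ →ₗ[R] E₂) (x : E₂),
      g (f x) ∈ (IsLocalRing.maximalIdeal R) • (⊤ : Submodule R E₂)) :
    ∀ φ : Module.End R (E₁ × E₂),
      φ ∈ Ideal.jacobson (⊥ : Ideal (Module.End R (E₁ × E₂))) ↔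
      ((LinearMap.fst R E₁ E₂ ∘ₗ φ ∘ₗ LinearMap.inl R E₁ E₂) ∈
          Ideal.jacobson (⊥ : Ideal (Module.End R E₁)) ∧
        (LinearMap.snd R E₁ E₂ ∘ₗ φ ∘ₗ LinearMap.inr R E₁ E₂) ∈
          Ideal.jacobson (⊥ : Ideal (Module.End R E₂))) :=
  stmt15_general R E₁ E₂ h12 h21
end

section
/- Let R be a Noetherian local ring, M a finitely generated module without free summand, and F = R^n a free module. Then the Jacobson radical of Λ = End_R(F ⊕ M) equals the matrix ideal [[m·End(F), Hom(M,F)], [Hom(F,M), J_0]], where J_0 is the Jacobson radical of End(M). Consequently, a non-free module with a free direct summand is never a local module. -/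
/-- `E` is a *local module*: its endomorphism ring has a unique maximal two-sided ideal,
equivalently a greatest proper two-sided ideal. -/
def IsLocalModule (R E : Type*) [CommRing R] [AddCommGroup E] [Module R E] : Prop :=
  ∃ I : TwoSidedIdeal (Module.End R E), I ≠ ⊤ ∧
    ∀ J : TwoSidedIdeal (Module.End R E), J ≠ ⊤ → J ≤ I

theorem Ring.mem_jacobson_iff_isUnit_one_add_mul {Λ : Type*} [Ring Λ] {x : Λ} :
    x ∈ Ring.jacobson Λ ↔ ∀ y, IsUnit (1 + y * x) := by
  have left_inv_iff : ∀ y z : Λ, z * y * x + z - 1 ∈ (⊥ : Ideal Λ) ↔ z * (1 + y * x) = 1 := by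
    intro y z
    rw [Ideal.mem_bot, sub_eq_zero, mul_add, mul_one, add_comm, mul_assoc]
  simp only [← Ideal.jacobson_bot, Ideal.mem_jacobson_iff, left_inv_iff]
  refine ⟨fun h y => ?_, fun h y => ⟨↑(h y).unit⁻¹, (h y).unit.inv_mul⟩⟩
  obtain ⟨z, hz⟩ := h y
  -- `z = 1 - z y x` has a left inverse too, so `z` is a unit with inverse `1 + y x`
  obtain ⟨w, hw⟩ := h (-(z * y))
  have hz' : 1 + -(z * y) * x = z := by
    nth_rewrite 1 [← hz]
    noncomm_ring
  rw [hz'] at hw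
  obtain rfl := left_inv_eq_right_inv hw hz
  exact ⟨⟨_, z, hw, hz⟩, rfl⟩

theorem Ring.isUnit_one_add_of_mem_jacobson {Λ : Type*} [Ring Λ] {x : Λ}
    (hx : x ∈ Ring.jacobson Λ) : IsUnit (1 + x) := by
  simpa using Ring.mem_jacobson_iff_isUnit_one_add_mul.1 hx 1

def TwoSidedIdeal.comapOfMulSubMem {Λ S : Type*} [Ring Λ] [Ring S] (J : Ideal S) [J.IsTwoSided]
    (c : Λ →+ S) (hc : ∀ x y, c (x * y) - c x * c y ∈ J) : TwoSidedIdeal Λ :=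
  .mk' {x | c x ∈ J} (by simp) (fun hx hy => by simpa using J.add_mem hx hy)
    (fun hx => by simpa using J.neg_mem hx)
    (fun {x y} hy => by simpa using J.add_mem (hc x y) (J.mul_mem_left (c x) hy))
    (fun {x y} hx => by simpa using J.add_mem (hc x y) (J.mul_mem_right (c y) hx))

theorem TwoSidedIdeal.mem_comapOfMulSubMem {Λ S : Type*} [Ring Λ] [Ring S] {J : Ideal S}
    [J.IsTwoSided] {c : Λ →+ S} {hc : ∀ x y, c (x * y) - c x * c y ∈ J} {x : Λ} :
    x ∈ comapOfMulSubMem J c hc ↔ c x ∈ J :=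
  TwoSidedIdeal.mem_mk' ..

theorem Ring.one_notMem_jacobson (Λ : Type*) [Ring Λ] [Nontrivial Λ] : (1 : Λ) ∉ Ring.jacobson Λ :=
  fun h => (Ring.jacobson_lt_top Λ).ne ((Ideal.eq_top_iff_one _).2 h)

section Radical

variable {R : Type*} [Semiring R] {X Y E : Type*} [AddCommGroup X] [Module R X]
  [AddCommGroup Y] [Module R Y] [AddCommGroup E] [Module R E]

theorem LinearMap.isUnit_one_add_comp_swap {a : X →ₗ[R] Y} {b : Y →ₗ[R] X}
    (h : IsUnit (1 + a ∘ₗ b)) : IsUnit (1 + b ∘ₗ a) := by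
  obtain ⟨u, hu⟩ := h
  set w : Module.End R Y := ↑u⁻¹
  have hw₁ : ∀ y, b (w y) + b (a (b (w y))) = b y := fun y => by
    simpa [hu] using congrArg b (LinearMap.congr_fun u.mul_inv y)
  have hw₂ : ∀ y, b (w y) + b (w (a (b y))) = b y := fun y => by
    simpa [hu] using congrArg b (LinearMap.congr_fun u.inv_mul y)
  refine ⟨⟨1 + b ∘ₗ a, 1 - b ∘ₗ w ∘ₗ a, ?_, ?_⟩, rfl⟩ <;> ext x <;>
    simp only [Module.End.mul_apply, LinearMap.add_apply, LinearMap.sub_apply,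
      Module.End.one_apply, LinearMap.comp_apply, map_add, map_sub]
  · linear_combination (norm := module) -hw₁ (a x)
  · linear_combination (norm := module) -hw₂ (a x)

theorem LinearMap.comp_mem_jacobson_of_forall {f : X →ₗ[R] Y}
    (hf : ∀ g : Y →ₗ[R] X, f ∘ₗ g ∈ Ring.jacobson (Module.End R Y)) (g : Y →ₗ[R] X) :
    g ∘ₗ f ∈ Ring.jacobson (Module.End R X) := by
  refine Ring.mem_jacobson_iff_isUnit_one_add_mul.2 fun y => ?_
  rw [Module.End.mul_eq_comp, ← LinearMap.comp_assoc]
  exact LinearMap.isUnit_one_add_comp_swap (Ring.isUnit_one_add_of_mem_jacobson (hf (y ∘ₗ g)))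

theorem LinearMap.comp_comp_mem_jacobson {f : X →ₗ[R] Y}
    (hf : ∀ g : Y →ₗ[R] X, g ∘ₗ f ∈ Ring.jacobson (Module.End R X))
    (π : E →ₗ[R] X) (ι : Y →ₗ[R] E) : ι ∘ₗ f ∘ₗ π ∈ Ring.jacobson (Module.End R E) := by
  refine Ring.mem_jacobson_iff_isUnit_one_add_mul.2 fun ψ => ?_
  rw [Module.End.mul_eq_comp, ← LinearMap.comp_assoc, ← LinearMap.comp_assoc]
  refine LinearMap.isUnit_one_add_comp_swap (Ring.isUnit_one_add_of_mem_jacobson ?_)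
  simpa only [LinearMap.comp_assoc] using hf (π ∘ₗ ψ ∘ₗ ι)

theorem LinearMap.comp_comp_mem_jacobson_of_mem {φ : Module.End R E}
    (hφ : φ ∈ Ring.jacobson (Module.End R E)) (π : E →ₗ[R] X) (ι : X →ₗ[R] E) :
    π ∘ₗ φ ∘ₗ ι ∈ Ring.jacobson (Module.End R X) :=
  LinearMap.comp_comp_mem_jacobson (fun g => Ideal.mul_mem_left _ g hφ) ι π

end Radical

section Blocks

variable {R : Type*} [Semiring R] {P Q T S : Type*} [AddCommGroup P] [Module R P]
  [AddCommGroup Q] [Module R Q] [AddCommGroup T] [Module R T] [AddCommGroup S] [Module R S]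

open LinearMap

theorem LinearMap.eq_sum_blocks (φ : Module.End R (P × Q)) :
    φ = inl R P Q ∘ₗ (fst R P Q ∘ₗ φ ∘ₗ inl R P Q) ∘ₗ fst R P Q
      + inl R P Q ∘ₗ (fst R P Q ∘ₗ φ ∘ₗ inr R P Q) ∘ₗ snd R P Q
      + inr R P Q ∘ₗ (snd R P Q ∘ₗ φ ∘ₗ inl R P Q) ∘ₗ fst R P Q
      + inr R P Q ∘ₗ (snd R P Q ∘ₗ φ ∘ₗ inr R P Q) ∘ₗ snd R P Q := by
  ext x <;> simp [Prod.mk_zero_zero]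

theorem LinearMap.comp_mul_comp (ψ : P × Q →ₗ[R] T) (x y : Module.End R (P × Q))
    (ι : S →ₗ[R] P × Q) :
    ψ ∘ₗ (x * y) ∘ₗ ι = (ψ ∘ₗ x ∘ₗ inl R P Q) ∘ₗ (fst R P Q ∘ₗ y ∘ₗ ι)
      + (ψ ∘ₗ x ∘ₗ inr R P Q) ∘ₗ (snd R P Q ∘ₗ y ∘ₗ ι) := by
  ext s; simp [← map_add]

theorem LinearMap.inl_comp_fst_add_inr_comp_snd :
    inl R P Q ∘ₗ fst R P Q + inr R P Q ∘ₗ snd R P Q = 1 := by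
  ext x <;> simp

theorem LinearMap.mem_jacobson_prod_iff
    (hPQ : ∀ (f : Q →ₗ[R] P) (g : P →ₗ[R] Q), f ∘ₗ g ∈ Ring.jacobson (Module.End R P))
    (φ : Module.End R (P × Q)) :
    φ ∈ Ring.jacobson (Module.End R (P × Q)) ↔
      fst R P Q ∘ₗ φ ∘ₗ inl R P Q ∈ Ring.jacobson (Module.End R P) ∧
        snd R P Q ∘ₗ φ ∘ₗ inr R P Q ∈ Ring.jacobson (Module.End R Q) := by
  refine ⟨fun hφ => ⟨comp_comp_mem_jacobson_of_mem hφ _ _, comp_comp_mem_jacobson_of_mem hφ _ _⟩,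
    fun ⟨hA, hD⟩ => ?_⟩
  rw [eq_sum_blocks φ]
  refine add_mem (add_mem (add_mem ?_ ?_) ?_) ?_ <;> refine comp_comp_mem_jacobson (fun g => ?_) _ _
  · exact Ideal.mul_mem_left _ g hA
  · exact comp_mem_jacobson_of_forall (hPQ _) g
  · exact hPQ g _
  · exact Ideal.mul_mem_left _ g hD

def LinearMap.fstCornerIdeal
    (hPQ : ∀ (f : Q →ₗ[R] P) (g : P →ₗ[R] Q), f ∘ₗ g ∈ Ring.jacobson (Module.End R P)) :
    TwoSidedIdeal (Module.End R (P × Q)) :=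
  TwoSidedIdeal.comapOfMulSubMem (Ring.jacobson (Module.End R P))
    (AddMonoidHom.mk' (fun χ => fst R P Q ∘ₗ χ ∘ₗ inl R P Q) fun _ _ => by
      rw [add_comp, comp_add])
    fun x y => by
      simp only [AddMonoidHom.mk'_apply]
      rw [comp_mul_comp, Module.End.mul_eq_comp, add_sub_cancel_left]
      exact hPQ _ _

def LinearMap.sndCornerIdeal
    (hPQ : ∀ (f : Q →ₗ[R] P) (g : P →ₗ[R] Q), f ∘ₗ g ∈ Ring.jacobson (Module.End R P)) :
    TwoSidedIdeal (Module.End R (P × Q)) :=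
  TwoSidedIdeal.comapOfMulSubMem (Ring.jacobson (Module.End R Q))
    (AddMonoidHom.mk' (fun χ => snd R P Q ∘ₗ χ ∘ₗ inr R P Q) fun _ _ => by
      rw [add_comp, comp_add])
    fun x y => by
      simp only [AddMonoidHom.mk'_apply]
      rw [comp_mul_comp, Module.End.mul_eq_comp, add_sub_cancel_right]
      exact comp_mem_jacobson_of_forall (hPQ _) _

end Blocks

section NotLocal

variable {R : Type*} [CommRing R] {P Q : Type*} [AddCommGroup P] [Module R P]
  [AddCommGroup Q] [Module R Q]

open LinearMap

theorem not_isLocalModule_prod [Nontrivial P] [Nontrivial Q]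
    (hPQ : ∀ (f : Q →ₗ[R] P) (g : P →ₗ[R] Q), f ∘ₗ g ∈ Ring.jacobson (Module.End R P)) :
    ¬ IsLocalModule R (P × Q) := by
  rintro ⟨I, hI, hmax⟩
  have h₁ : fstCornerIdeal hPQ ≠ ⊤ := fun h => Ring.one_notMem_jacobson (Module.End R P) <| by
    simpa [fstCornerIdeal, TwoSidedIdeal.mem_comapOfMulSubMem, Module.End.one_eq_id]
      using (fstCornerIdeal hPQ).one_mem h
  have h₂ : sndCornerIdeal hPQ ≠ ⊤ := fun h => Ring.one_notMem_jacobson (Module.End R Q) <| by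
    simpa [sndCornerIdeal, TwoSidedIdeal.mem_comapOfMulSubMem, Module.End.one_eq_id]
      using (sndCornerIdeal hPQ).one_mem h
  have hinr : inr R P Q ∘ₗ snd R P Q ∈ fstCornerIdeal hPQ := by
    simp [fstCornerIdeal, TwoSidedIdeal.mem_comapOfMulSubMem, ← comp_assoc]
  have hinl : inl R P Q ∘ₗ fst R P Q ∈ sndCornerIdeal hPQ := by
    simp [sndCornerIdeal, TwoSidedIdeal.mem_comapOfMulSubMem, ← comp_assoc]
  apply hI
  rw [← TwoSidedIdeal.one_mem_iff, ← inl_comp_fst_add_inr_comp_snd]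
  exact I.add_mem (hmax _ h₂ hinl) (hmax _ h₁ hinr)

end NotLocal

section Local

variable {R : Type*} [CommRing R] {N : Type*} [AddCommGroup N] [Module R N]

open IsLocalRing

theorem Submodule.mem_smul_top_pi_iff {ι : Type*} [Fintype ι] (I : Ideal R) (v : ι → R) :
    v ∈ I • (⊤ : Submodule R (ι → R)) ↔ ∀ i, v i ∈ I := by
  refine ⟨fun hv i => ?_, fun hv => ?_⟩
  · simpa [Ideal.smul_eq_mul] using
      Submodule.smul_top_le_comap_smul_top I (LinearMap.proj i) hv
  · classical
    rw [pi_eq_sum_univ v]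
    exact sum_mem fun i _ => Submodule.smul_mem_smul (hv i) trivial

theorem LinearMap.mem_smul_top_iff_range_le {ι : Type*} [Fintype ι] (I : Ideal R)
    (f : (ι → R) →ₗ[R] N) :
    f ∈ I • (⊤ : Submodule R ((ι → R) →ₗ[R] N)) ↔ range f ≤ I • ⊤ := by
  refine ⟨fun hf => ?_, fun hf => ?_⟩
  · rintro _ ⟨v, rfl⟩
    exact Submodule.smul_top_le_comap_smul_top I (LinearMap.applyₗ v) hf
  · classical
    have hsum : f = ∑ i, LinearMap.smulRightₗ (LinearMap.proj i) (f (Pi.single i 1)) := by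
      ext i
      simp [Pi.single_apply]
    rw [hsum]
    exact sum_mem fun i _ => Submodule.smul_top_le_comap_smul_top I _ (hf ⟨_, rfl⟩)

theorem LinearMap.mem_jacobson_of_range_le_smul_top [Module.Finite R N] {I : Ideal R}
    (hI : I ≤ Ring.jacobson R) {f : Module.End R N} (hf : range f ≤ I • ⊤) :
    f ∈ Ring.jacobson (Module.End R N) := by
  refine Ring.mem_jacobson_iff_isUnit_one_add_mul.2 fun y => ?_
  have hsurj : Function.Surjective (1 + y * f : Module.End R N) := by
    rw [← range_eq_top, eq_top_iff]
    refine Submodule.le_of_le_smul_of_le_jacobson_bot Module.Finite.fg_top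
      (Ideal.jacobson_bot (R := R) ▸ hI) fun v _ => ?_
    rw [show v = (1 + y * f : Module.End R N) v - y (f v) by simp]
    exact Submodule.sub_mem _ (Submodule.mem_sup_left ⟨v, rfl⟩)
      (Submodule.mem_sup_right (Submodule.smul_top_le_comap_smul_top I y (hf ⟨v, rfl⟩)))
  exact (Module.End.isUnit_iff _).2 (OrzechProperty.bijective_of_surjective_endomorphism _ hsurj)

variable [IsLocalRing R]

theorem exists_comp_eq_id_of_apply_notMem_maximalIdeal (g : N →ₗ[R] R) {v : N}
    (hv : g v ∉ maximalIdeal R) : ∃ s : R →ₗ[R] N, g ∘ₗ s = LinearMap.id := by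
  obtain ⟨u, hu⟩ := notMem_maximalIdeal.1 hv
  refine ⟨LinearMap.toSpanSingleton R N (↑u⁻¹ • v), LinearMap.ext_ring ?_⟩
  simp [← hu, Units.smul_def]

theorem apply_mem_maximalIdeal_of_not_hasFreeSummand (hN : ¬ HasFreeSummand R N)
    (g : N →ₗ[R] R) (v : N) : g v ∈ maximalIdeal R := by
  by_contra hv
  exact hN ⟨g, exists_comp_eq_id_of_apply_notMem_maximalIdeal g hv⟩

theorem apply_mem_maximalIdeal_of_mem_jacobson {x : Module.End R N}
    (hx : x ∈ Ring.jacobson (Module.End R N)) (g : N →ₗ[R] R) (v : N) :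
    g (x v) ∈ maximalIdeal R := by
  by_contra hv
  obtain ⟨s, hs⟩ := exists_comp_eq_id_of_apply_notMem_maximalIdeal (g ∘ₗ x) hv
  have := LinearMap.comp_comp_mem_jacobson_of_mem hx g s
  rw [← LinearMap.comp_assoc, hs] at this
  exact Ring.one_notMem_jacobson _ this

theorem mem_jacobson_end_pi_iff {ι : Type*} [Fintype ι] (x : Module.End R (ι → R)) :
    x ∈ Ring.jacobson (Module.End R (ι → R)) ↔
      x ∈ maximalIdeal R • (⊤ : Submodule R (Module.End R (ι → R))) := by
  rw [LinearMap.mem_smul_top_iff_range_le]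
  refine ⟨fun hx => ?_, LinearMap.mem_jacobson_of_range_le_smul_top ?_⟩
  · rintro _ ⟨v, rfl⟩
    exact (Submodule.mem_smul_top_pi_iff _ _).2 fun i =>
      apply_mem_maximalIdeal_of_mem_jacobson hx (LinearMap.proj i) v
  · exact (maximalIdeal_le_jacobson ⊥).trans_eq Ideal.jacobson_bot

theorem comp_mem_jacobson_of_not_hasFreeSummand {ι : Type*} [Fintype ι]
    (hN : ¬ HasFreeSummand R N) (f : N →ₗ[R] (ι → R)) (g : (ι → R) →ₗ[R] N) :
    f ∘ₗ g ∈ Ring.jacobson (Module.End R (ι → R)) := by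
  refine LinearMap.mem_jacobson_of_range_le_smul_top (I := maximalIdeal R)
    ((maximalIdeal_le_jacobson ⊥).trans_eq Ideal.jacobson_bot)
    ((LinearMap.range_comp_le_range g f).trans ?_)
  rintro _ ⟨v, rfl⟩
  exact (Submodule.mem_smul_top_pi_iff _ _).2 fun i =>
    apply_mem_maximalIdeal_of_not_hasFreeSummand hN (LinearMap.proj i ∘ₗ f) v

end Local

theorem stmt16_general (R M : Type) [CommRing R] [IsLocalRing R]
    [AddCommGroup M] [Module R M] [Nontrivial M]
    (hM : ¬ HasFreeSummand R M) (n : ℕ) (hn : 1 ≤ n) :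
    (∀ φ : Module.End R ((Fin n → R) × M),
      φ ∈ Ideal.jacobson (⊥ : Ideal (Module.End R ((Fin n → R) × M))) ↔
      ((LinearMap.fst R (Fin n → R) M ∘ₗ φ ∘ₗ LinearMap.inl R (Fin n → R) M) ∈
          (IsLocalRing.maximalIdeal R) •
            (⊤ : Submodule R (Module.End R (Fin n → R))) ∧
        (LinearMap.snd R (Fin n → R) M ∘ₗ φ ∘ₗ LinearMap.inr R (Fin n → R) M) ∈
          Ideal.jacobson (⊥ : Ideal (Module.End R M)))) ∧
    ¬ IsLocalModule R ((Fin n → R) × M) := by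
  have hFM := comp_mem_jacobson_of_not_hasFreeSummand (ι := Fin n) hM
  have : Nonempty (Fin n) := ⟨⟨0, hn⟩⟩
  refine ⟨fun φ => ?_, not_isLocalModule_prod hFM⟩
  rw [Ideal.jacobson_bot, Ideal.jacobson_bot, LinearMap.mem_jacobson_prod_iff hFM,
    mem_jacobson_end_pi_iff]

/-- Let `(R, m)` be a Noetherian local ring, `M ≠ 0` a finitely generated module without
free summand and `F = R^n` free (`n ≥ 1`).  Then the Jacobson radical of
`Λ = End_R(F ⊕ M)` is the matrix ideal `[[m·End(F), Hom(M,F)], [Hom(F,M), J₀]]` with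
`J₀` the Jacobson radical of `End(M)`; consequently `F ⊕ M` — a non-free module with a
free summand — is not a local module. -/
theorem stmt16 (R M : Type) [CommRing R] [IsLocalRing R] [IsNoetherianRing R]
    [AddCommGroup M] [Module R M] [Module.Finite R M] [Nontrivial M]
    (hM : ¬ HasFreeSummand R M) (n : ℕ) (hn : 1 ≤ n) :
    (∀ φ : Module.End R ((Fin n → R) × M),
      φ ∈ Ideal.jacobson (⊥ : Ideal (Module.End R ((Fin n → R) × M))) ↔
      ((LinearMap.fst R (Fin n → R) M ∘ₗ φ ∘ₗ LinearMap.inl R (Fin n → R) M) ∈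
          (IsLocalRing.maximalIdeal R) •
            (⊤ : Submodule R (Module.End R (Fin n → R))) ∧
        (LinearMap.snd R (Fin n → R) M ∘ₗ φ ∘ₗ LinearMap.inr R (Fin n → R) M) ∈
          Ideal.jacobson (⊥ : Ideal (Module.End R M)))) ∧
    ¬ IsLocalModule R ((Fin n → R) × M) :=
  stmt16_general R M hM n hn
end
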